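/- arXiv:math/9812097 — 3 statements merged into one kernel-verified Lean document; each statement's English description precedes it below -/
import Mathlib

section
/- Let R be a rewrite system on T. If (t₁,t₂) is a critical pair of →_R, then either (t₁,t₂) resolves, or there is an overlap between two rules of R (of one of the five types) whose resulting critical pair (c₁,c₂) has the property that if (c₁,c₂) resolves then (t₁,t₂) resolves. -/
variable {Γ Δ : Type} [Quiver.{0} Δ] {X : Γ → Type} {F : Γ → Δ}

/-- The set `T := ⨆_{B} ⨆_{A} XA × 𝒫(FA, B)` of tagged words `x|p`. -/
def Tagged (X : Γ → Type) (F : Γ → Δ) : Type :=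
  Σ (B : Δ) (A : Γ), X A × Quiver.Path (F A) B

namespace Tagged

/-- `τ(x|p) := tgt p`. -/
abbrev tau (t : Tagged X F) : Δ := t.1

/-- The action `(x|p)·q := x|pq` of a path `q` with `src q = τ t`. -/
def act (t : Tagged X F) {B B' : Δ} (h : t.tau = B) (q : Quiver.Path B B') : Tagged X F :=
  ⟨B', t.2.1, t.2.2.1, Quiver.Path.comp (h ▸ t.2.2.2 : Quiver.Path (F t.2.1) B) q⟩

end Tagged

/-- Pairs of parallel paths (same source and same target). -/
def PathPair (Δ : Type) [Quiver.{0} Δ] : Type :=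
  Σ (a b : Δ), Quiver.Path a b × Quiver.Path a b

/-- The reduction relation `→_R` generated by a rewrite system `R = (R_T, R_P)` on `T`. -/
inductive Red (RT : Set (Tagged X F × Tagged X F)) (RP : Set (PathPair Δ)) :
    Tagged X F → Tagged X F → Prop
  | tag {s u : Tagged X F} {B B' : Δ} (hmem : (s, u) ∈ RT)
      (hs : s.tau = B) (hu : u.tau = B) (q : Quiver.Path B B') :
      Red RT RP (s.act hs q) (u.act hu q)
  | path {s : Tagged X F} {a b B' : Δ} {l r : Quiver.Path a b}
      (hmem : (⟨a, b, (l, r)⟩ : PathPair Δ) ∈ RP)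
      (hs : s.tau = a) (q : Quiver.Path b B') :
      Red RT RP (s.act hs (l.comp q)) (s.act hs (r.comp q))

/-- One-step path rewriting with respect to the two-sided rules `R_P`. -/
def RedPath (RP : Set (PathPair Δ)) {a b : Δ} (p₁ p₂ : Quiver.Path a b) : Prop :=
  ∃ (c d : Δ) (l r : Quiver.Path c d) (u : Quiver.Path a c) (v : Quiver.Path d b),
    (⟨c, d, (l, r)⟩ : PathPair Δ) ∈ RP ∧ p₁ = (u.comp l).comp v ∧ p₂ = (u.comp r).comp v

/-- A pair of elements of `T` resolves if both reduce (in `→*_R`) to a common term. -/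
def ResolvesT (RT : Set (Tagged X F × Tagged X F)) (RP : Set (PathPair Δ))
    (t₁ t₂ : Tagged X F) : Prop :=
  ∃ v, Relation.ReflTransGen (Red RT RP) t₁ v ∧ Relation.ReflTransGen (Red RT RP) t₂ v

/-- A pair of parallel paths resolves if both reduce (via the rules `R_P`)
to a common path. -/
def ResolvesP (RP : Set (PathPair Δ)) {a b : Δ} (p₁ p₂ : Quiver.Path a b) : Prop :=
  ∃ w : Quiver.Path a b,
    Relation.ReflTransGen (fun p q => RedPath RP p q) p₁ w ∧
    Relation.ReflTransGen (fun p q => RedPath RP p q) p₂ w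

/-- `(c₁, c₂)` is the critical pair in `T` resulting from an overlap of two rules of `R`,
of types (i), (iv) or (v). -/
def OverlapPairT (RT : Set (Tagged X F × Tagged X F)) (RP : Set (PathPair Δ))
    (c₁ c₂ : Tagged X F) : Prop :=
  -- type (i): s₁ = s₂·q, resulting pair (u₁, u₂·q)
  (∃ (s₁ u₁ s₂ u₂ : Tagged X F) (B B' : Δ) (h₂ : s₂.tau = B) (hu₂ : u₂.tau = B)
      (q : Quiver.Path B B'),
      (s₁, u₁) ∈ RT ∧ (s₂, u₂) ∈ RT ∧ s₁ = s₂.act h₂ q ∧ c₁ = u₁ ∧ c₂ = u₂.act hu₂ q) ∨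
  -- type (iv): s₁·q = s·l, resulting pair (u₁·q, s·r)
  (∃ (s₁ u₁ s : Tagged X F) (a b B : Δ) (l r : Quiver.Path a b)
      (hs₁ : s₁.tau = B) (hu₁ : u₁.tau = B) (q : Quiver.Path B b) (hs : s.tau = a),
      (s₁, u₁) ∈ RT ∧ (⟨a, b, (l, r)⟩ : PathPair Δ) ∈ RP ∧
      s₁.act hs₁ q = s.act hs l ∧ c₁ = u₁.act hu₁ q ∧ c₂ = s.act hs r) ∨
  -- type (v): s₁ = s·(lq), resulting pair (u₁, s·(rq))
  (∃ (s₁ u₁ s : Tagged X F) (a b B : Δ) (l r : Quiver.Path a b)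
      (hs : s.tau = a) (q : Quiver.Path b B),
      (s₁, u₁) ∈ RT ∧ (⟨a, b, (l, r)⟩ : PathPair Δ) ∈ RP ∧
      s₁ = s.act hs (l.comp q) ∧ c₁ = u₁ ∧ c₂ = s.act hs (r.comp q))

/-- `(c₁, c₂)` is the critical pair of paths resulting from an overlap of two rules
of `R_P`, of type (ii) or (iii). -/
def OverlapPairP (RP : Set (PathPair Δ)) {a b : Δ} (c₁ c₂ : Quiver.Path a b) : Prop :=
  -- type (ii): l₁ = p l₂ q, resulting pair (r₁, p r₂ q)
  (∃ (l₁ r₁ : Quiver.Path a b) (a₂ b₂ : Δ) (l₂ r₂ : Quiver.Path a₂ b₂)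
      (p : Quiver.Path a a₂) (q : Quiver.Path b₂ b),
      (⟨a, b, (l₁, r₁)⟩ : PathPair Δ) ∈ RP ∧ (⟨a₂, b₂, (l₂, r₂)⟩ : PathPair Δ) ∈ RP ∧
      l₁ = (p.comp l₂).comp q ∧ c₁ = r₁ ∧ c₂ = (p.comp r₂).comp q) ∨
  -- type (iii): l₁ q = p l₂, resulting pair (r₁ q, p r₂)
  (∃ (b₁ a₂ : Δ) (l₁ r₁ : Quiver.Path a b₁) (l₂ r₂ : Quiver.Path a₂ b)
      (q : Quiver.Path b₁ b) (p : Quiver.Path a a₂),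
      (⟨a, b₁, (l₁, r₁)⟩ : PathPair Δ) ∈ RP ∧ (⟨a₂, b, (l₂, r₂)⟩ : PathPair Δ) ∈ RP ∧
      l₁.comp q = p.comp l₂ ∧ c₁ = r₁.comp q ∧ c₂ = p.comp r₂)


/-!
Both one-step reductions of `t = x|w` rewrite a factor of the same path `w`. Paths in a free
category are equidivisible: if `p₁ q₁ = p₂ q₂`, then `p₂ = p₁ m` and `q₁ = m q₂` for some `m`, or
symmetrically. Comparing the two factorisations of `w` therefore places the two redexes in one of
the five overlap configurations (redexes that do not meet count as overlaps of type (iii) or (iv)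
along the path between them), and the pair `(t₁, t₂)` is the critical pair of that overlap
multiplied on the right by a path. Since `→_R` commutes with right multiplication by paths, a
resolution of the overlap's critical pair yields one of `(t₁, t₂)`.
-/

namespace Quiver.Path

variable {V : Type*} [Quiver V]

theorem eq_comp_or_eq_comp_of_comp_eq_comp {a : V} :
    ∀ {b₁ b₂ c : V} {p₁ : Path a b₁} {q₁ : Path b₁ c} {p₂ : Path a b₂} {q₂ : Path b₂ c},
      p₁.comp q₁ = p₂.comp q₂ →
      (∃ m : Path b₁ b₂, p₂ = p₁.comp m ∧ q₁ = m.comp q₂) ∨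
      (∃ m : Path b₂ b₁, p₁ = p₂.comp m ∧ q₂ = m.comp q₁)
  | _, _, _, p₁, q₁, p₂, .nil, h => Or.inl ⟨q₁, by simpa using h.symm, (comp_nil q₁).symm⟩
  | _, _, _, p₁, .nil, p₂, .cons q₂ e, h => Or.inr ⟨q₂.cons e, by simpa using h, (comp_nil _).symm⟩
  | _, _, _, p₁, .cons q₁ e₁, p₂, .cons q₂ e₂, h => by
    obtain ⟨rfl, hpq, he⟩ := cons.inj h
    obtain rfl := eq_of_heq he
    rcases eq_comp_or_eq_comp_of_comp_eq_comp (eq_of_heq hpq) with ⟨m, hp, hq⟩ | ⟨m, hp, hq⟩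
    · exact Or.inl ⟨m, hp, by rw [hq, comp_cons]⟩
    · exact Or.inr ⟨m, hp, by rw [hq, comp_cons]⟩

end Quiver.Path

open Quiver

namespace Tagged

/-- The tagged word `x|p`. -/
abbrev of {A : Γ} (x : X A) {B : Δ} (p : Path (F A) B) : Tagged X F := ⟨B, A, x, p⟩

theorem exists_eq_of (t : Tagged X F) {B : Δ} (h : t.tau = B) :
    ∃ (A : Γ) (x : X A) (p : Path (F A) B), t = of x p := by
  obtain ⟨B, A, x, p⟩ := t
  subst h
  exact ⟨A, x, p, rfl⟩

end Tagged

open Tagged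

section Rewriting

variable {RT : Set (Tagged X F × Tagged X F)} {RP : Set (PathPair Δ)}

theorem Red.of_tag {A A' : Γ} {x : X A} {y : X A'} {B C : Δ}
    {p : Path (F A) B} {p' : Path (F A') B} (hmem : (of x p, of y p') ∈ RT) (q : Path B C) :
    Red RT RP (of x (p.comp q)) (of y (p'.comp q)) :=
  Red.tag hmem rfl rfl q

theorem Red.of_path {a b : Δ} {l r : Path a b} (hmem : (⟨a, b, (l, r)⟩ : PathPair Δ) ∈ RP)
    {A : Γ} (x : X A) {C : Δ} (p : Path (F A) a) (q : Path b C) :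
    Red RT RP (of x (p.comp (l.comp q))) (of x (p.comp (r.comp q))) :=
  Red.path (s := of x p) hmem rfl q

theorem Red.tau_eq {t₁ t₂ : Tagged X F} (h : Red RT RP t₁ t₂) : t₁.tau = t₂.tau := by
  cases h <;> rfl

theorem Red.act {t₁ t₂ : Tagged X F} (h : Red RT RP t₁ t₂) {B B' : Δ}
    (h₁ : t₁.tau = B) (h₂ : t₂.tau = B) (q : Path B B') :
    Red RT RP (t₁.act h₁ q) (t₂.act h₂ q) := by
  cases h with
  | @tag s u C C' hmem hs hu q₁ =>
    obtain rfl : C' = B := h₁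
    obtain ⟨A, x, p, rfl⟩ := exists_eq_of s hs
    obtain ⟨A', y, p', rfl⟩ := exists_eq_of u hu
    show Red RT RP (of x ((p.comp q₁).comp q)) (of y ((p'.comp q₁).comp q))
    simpa only [Path.comp_assoc] using Red.of_tag (RP := RP) hmem (q₁.comp q)
  | @path s a b C l r hmem hs q₁ =>
    obtain rfl : C = B := h₁
    obtain ⟨A, x, p, rfl⟩ := exists_eq_of s hs
    show Red RT RP (of x ((p.comp (l.comp q₁)).comp q)) (of x ((p.comp (r.comp q₁)).comp q))
    simpa only [Path.comp_assoc] using Red.of_path (RT := RT) hmem x p (q₁.comp q)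

theorem reflTransGen_red_tau_eq {t v : Tagged X F} (h : Relation.ReflTransGen (Red RT RP) t v) :
    t.tau = v.tau := by
  induction h with
  | refl => rfl
  | tail _ hstep ih => exact ih.trans hstep.tau_eq

theorem reflTransGen_red_act {t v : Tagged X F} (h : Relation.ReflTransGen (Red RT RP) t v)
    {B B' : Δ} (ht : t.tau = B) (hv : v.tau = B) (q : Path B B') :
    Relation.ReflTransGen (Red RT RP) (t.act ht q) (v.act hv q) := by
  induction h with
  | refl => rfl
  | tail _ hstep ih => exact (ih (hstep.tau_eq.trans hv)).tail (hstep.act _ hv q)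

theorem ResolvesT.symm {t₁ t₂ : Tagged X F} (h : ResolvesT RT RP t₁ t₂) :
    ResolvesT RT RP t₂ t₁ :=
  let ⟨v, h₁, h₂⟩ := h
  ⟨v, h₂, h₁⟩

theorem ResolvesT.act {t₁ t₂ : Tagged X F} (h : ResolvesT RT RP t₁ t₂)
    {B B' : Δ} (h₁ : t₁.tau = B) (h₂ : t₂.tau = B) (q : Path B B') :
    ResolvesT RT RP (t₁.act h₁ q) (t₂.act h₂ q) := by
  obtain ⟨v, hv₁, hv₂⟩ := h
  have hv : v.tau = B := (reflTransGen_red_tau_eq hv₁).symm.trans h₁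
  exact ⟨v.act hv q, reflTransGen_red_act hv₁ h₁ hv q, reflTransGen_red_act hv₂ h₂ hv q⟩

theorem ResolvesT.of_comp {A A' : Γ} {x : X A} {y : X A'} {B C : Δ}
    {p : Path (F A) B} {p' : Path (F A') B} (h : ResolvesT RT RP (of x p) (of y p'))
    (q : Path B C) : ResolvesT RT RP (of x (p.comp q)) (of y (p'.comp q)) :=
  h.act rfl rfl q

theorem RedPath.red_of {a b : Δ} {c c' : Path a b} (h : RedPath RP c c')
    {A : Γ} (x : X A) {C : Δ} (p : Path (F A) a) (q : Path b C) :
    Red RT RP (of x (p.comp (c.comp q))) (of x (p.comp (c'.comp q))) := by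
  obtain ⟨_, _, l, r, u, v, hm, rfl, rfl⟩ := h
  simpa only [Path.comp_assoc] using Red.of_path (RT := RT) hm x (p.comp u) (v.comp q)

theorem ResolvesP.resolvesT_of {a b : Δ} {c₁ c₂ : Path a b} (h : ResolvesP RP c₁ c₂)
    {A : Γ} (x : X A) {C : Δ} (p : Path (F A) a) (q : Path b C) :
    ResolvesT RT RP (of x (p.comp (c₁.comp q))) (of x (p.comp (c₂.comp q))) := by
  obtain ⟨w, hw₁, hw₂⟩ := h
  have lift := Relation.ReflTransGen.lift (fun c : Path a b ↦ of x (p.comp (c.comp q)))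
    (fun _ _ (hc : RedPath RP _ _) ↦ hc.red_of (RT := RT) x p q)
  exact ⟨_, lift _ _ hw₁, lift _ _ hw₂⟩

end Rewriting

section CriticalPairs

variable {RT : Set (Tagged X F × Tagged X F)} {RP : Set (PathPair Δ)}

variable (RT RP) in
def ResolvesUpToOverlap (t₁ t₂ : Tagged X F) : Prop :=
  ResolvesT RT RP t₁ t₂ ∨
    (∃ c₁ c₂ : Tagged X F, OverlapPairT RT RP c₁ c₂ ∧
        (ResolvesT RT RP c₁ c₂ → ResolvesT RT RP t₁ t₂)) ∨
    (∃ (a b : Δ) (c₁ c₂ : Path a b), OverlapPairP RP c₁ c₂ ∧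
        (ResolvesP RP c₁ c₂ → ResolvesT RT RP t₁ t₂))

theorem ResolvesUpToOverlap.symm {t₁ t₂ : Tagged X F} (h : ResolvesUpToOverlap RT RP t₁ t₂) :
    ResolvesUpToOverlap RT RP t₂ t₁ := by
  rcases h with h | ⟨c₁, c₂, ho, hr⟩ | ⟨a, b, c₁, c₂, ho, hr⟩
  · exact .inl h.symm
  · exact .inr (.inl ⟨c₁, c₂, ho, fun h ↦ (hr h).symm⟩)
  · exact .inr (.inr ⟨a, b, c₁, c₂, ho, fun h ↦ (hr h).symm⟩)

theorem ResolvesUpToOverlap.of_overlapPairT {t₁ t₂ c₁ c₂ : Tagged X F}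
    (ho : OverlapPairT RT RP c₁ c₂) (hr : ResolvesT RT RP c₁ c₂ → ResolvesT RT RP t₁ t₂) :
    ResolvesUpToOverlap RT RP t₁ t₂ :=
  .inr (.inl ⟨c₁, c₂, ho, hr⟩)

theorem ResolvesUpToOverlap.of_overlapPairP {t₁ t₂ : Tagged X F} {a b : Δ} {c₁ c₂ : Path a b}
    (ho : OverlapPairP RP c₁ c₂) (hr : ResolvesP RP c₁ c₂ → ResolvesT RT RP t₁ t₂) :
    ResolvesUpToOverlap RT RP t₁ t₂ :=
  .inr (.inr ⟨a, b, c₁, c₂, ho, hr⟩)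

variable (RT RP) in
def IsReductOf {A : Γ} (x : X A) {C : Δ} (w : Path (F A) C) (t : Tagged X F) : Prop :=
  (∃ (B : Δ) (p : Path (F A) B) (q : Path B C) (A' : Γ) (y : X A') (v : Path (F A') B),
      (of x p, of y v) ∈ RT ∧ w = p.comp q ∧ t = of y (v.comp q)) ∨
  (∃ (a b : Δ) (l r : Path a b) (p : Path (F A) a) (q : Path b C),
      (⟨a, b, (l, r)⟩ : PathPair Δ) ∈ RP ∧ w = p.comp (l.comp q) ∧ t = of x (p.comp (r.comp q)))

theorem Red.exists_isReductOf {t t' : Tagged X F} (h : Red RT RP t t') :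
    ∃ (A : Γ) (x : X A) (C : Δ) (w : Path (F A) C), t = of x w ∧ IsReductOf RT RP x w t' := by
  cases h with
  | tag hmem hs hu q =>
    obtain ⟨A, x, p, rfl⟩ := exists_eq_of _ hs
    obtain ⟨A', y, v, rfl⟩ := exists_eq_of _ hu
    exact ⟨A, x, _, p.comp q, rfl, .inl ⟨_, p, q, A', y, v, hmem, rfl, rfl⟩⟩
  | @path s a b C l r hmem hs q =>
    obtain ⟨A, x, p, rfl⟩ := exists_eq_of s hs
    exact ⟨A, x, C, p.comp (l.comp q), rfl, .inr ⟨a, b, l, r, p, q, hmem, rfl, rfl⟩⟩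

theorem ResolvesUpToOverlap.tag_tag_of_prefix {A A₁ A₂ : Γ} {x : X A} {y₁ : X A₁} {y₂ : X A₂}
    {B₁ B₂ C : Δ} {p₁ : Path (F A) B₁} {v₁ : Path (F A₁) B₁} {p₂ : Path (F A) B₂}
    {v₂ : Path (F A₂) B₂} (h₁ : (of x p₁, of y₁ v₁) ∈ RT) (h₂ : (of x p₂, of y₂ v₂) ∈ RT)
    (m : Path B₁ B₂) (hp : p₂ = p₁.comp m) (q : Path B₂ C) :
    ResolvesUpToOverlap RT RP (of y₁ (v₁.comp (m.comp q))) (of y₂ (v₂.comp q)) := by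
  subst hp
  refine .of_overlapPairT (c₁ := of y₂ v₂) (c₂ := of y₁ (v₁.comp m))
    (.inl ⟨_, _, _, _, B₁, B₂, rfl, rfl, m, h₂, h₁, rfl, rfl, rfl⟩) fun h ↦ ?_
  simpa only [Path.comp_assoc] using (h.of_comp q).symm

theorem ResolvesUpToOverlap.tag_tag {A A₁ A₂ : Γ} {x : X A} {y₁ : X A₁} {y₂ : X A₂}
    {B₁ B₂ C : Δ} {p₁ : Path (F A) B₁} {v₁ : Path (F A₁) B₁} {p₂ : Path (F A) B₂}
    {v₂ : Path (F A₂) B₂} (h₁ : (of x p₁, of y₁ v₁) ∈ RT) (h₂ : (of x p₂, of y₂ v₂) ∈ RT)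
    {q₁ : Path B₁ C} {q₂ : Path B₂ C} (heq : p₁.comp q₁ = p₂.comp q₂) :
    ResolvesUpToOverlap RT RP (of y₁ (v₁.comp q₁)) (of y₂ (v₂.comp q₂)) := by
  rcases Path.eq_comp_or_eq_comp_of_comp_eq_comp heq with ⟨m, hp, rfl⟩ | ⟨m, hp, rfl⟩
  · exact tag_tag_of_prefix h₁ h₂ m hp q₂
  · exact (tag_tag_of_prefix h₂ h₁ m hp q₁).symm

theorem ResolvesUpToOverlap.tag_path {A A' : Γ} {x : X A} {y : X A'} {B a b C : Δ}
    {p₁ : Path (F A) B} {v : Path (F A') B} (h₁ : (of x p₁, of y v) ∈ RT)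
    {l r : Path a b} (h₂ : (⟨a, b, (l, r)⟩ : PathPair Δ) ∈ RP)
    {p : Path (F A) a} {q₁ : Path B C} {q : Path b C} (heq : p₁.comp q₁ = p.comp (l.comp q)) :
    ResolvesUpToOverlap RT RP (of y (v.comp q₁)) (of x (p.comp (r.comp q))) := by
  rcases Path.eq_comp_or_eq_comp_of_comp_eq_comp heq with ⟨m, rfl, rfl⟩ | ⟨m, rfl, hm⟩
  · refine .of_overlapPairT (c₁ := of y (v.comp (m.comp l))) (c₂ := of x ((p₁.comp m).comp r))
      (.inr (.inl ⟨_, _, of x (p₁.comp m), a, b, B, l, r, rfl, rfl, m.comp l, rfl, h₁, h₂,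
        congrArg (of x) (Path.comp_assoc p₁ m l).symm, rfl, rfl⟩)) fun h ↦ ?_
    simpa only [Path.comp_assoc] using h.of_comp q
  rcases Path.eq_comp_or_eq_comp_of_comp_eq_comp hm with ⟨k, rfl, rfl⟩ | ⟨k, rfl, rfl⟩
  · refine .of_overlapPairT (c₁ := of y v) (c₂ := of x (p.comp (r.comp k)))
      (.inr (.inr ⟨_, _, of x p, a, b, B, l, r, rfl, k, h₁, h₂, rfl, rfl, rfl⟩)) fun h ↦ ?_
    simpa only [Path.comp_assoc] using h.of_comp q₁
  · refine .of_overlapPairT (c₁ := of y (v.comp k)) (c₂ := of x (p.comp r))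
      (.inr (.inl ⟨_, _, of x p, a, b, B, m.comp k, r, rfl, rfl, k, rfl, h₁, h₂,
        congrArg (of x) (Path.comp_assoc p m k), rfl, rfl⟩)) fun h ↦ ?_
    simpa only [Path.comp_assoc] using h.of_comp q

theorem ResolvesUpToOverlap.path_path_of_prefix {A : Γ} {x : X A} {a₁ b₁ a₂ b₂ C : Δ}
    {l₁ r₁ : Path a₁ b₁} {l₂ r₂ : Path a₂ b₂} (h₁ : (⟨a₁, b₁, (l₁, r₁)⟩ : PathPair Δ) ∈ RP)
    (h₂ : (⟨a₂, b₂, (l₂, r₂)⟩ : PathPair Δ) ∈ RP) {p₁ : Path (F A) a₁} {p₂ : Path (F A) a₂}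
    (m : Path b₁ b₂) (q : Path b₂ C) (hp : p₂.comp l₂ = p₁.comp (l₁.comp m)) :
    ResolvesUpToOverlap RT RP (of x (p₁.comp (r₁.comp (m.comp q))))
      (of x (p₂.comp (r₂.comp q))) := by
  rcases Path.eq_comp_or_eq_comp_of_comp_eq_comp hp with ⟨n, rfl, hn⟩ | ⟨n, rfl, hn⟩
  · refine .of_overlapPairP (.inl ⟨l₂, r₂, a₁, b₁, l₁, r₁, n, m, h₂, h₁,
      by rw [hn, Path.comp_assoc], rfl, rfl⟩) fun h ↦ ?_
    simpa only [Path.comp_assoc] using (h.resolvesT_of x p₂ q).symm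
  · refine .of_overlapPairP (.inr ⟨b₁, a₂, l₁, r₁, l₂, r₂, m, n, h₁, h₂, hn, rfl, rfl⟩)
      fun h ↦ ?_
    simpa only [Path.comp_assoc] using h.resolvesT_of x p₁ q

theorem ResolvesUpToOverlap.path_path {A : Γ} {x : X A} {a₁ b₁ a₂ b₂ C : Δ}
    {l₁ r₁ : Path a₁ b₁} {l₂ r₂ : Path a₂ b₂} (h₁ : (⟨a₁, b₁, (l₁, r₁)⟩ : PathPair Δ) ∈ RP)
    (h₂ : (⟨a₂, b₂, (l₂, r₂)⟩ : PathPair Δ) ∈ RP) {p₁ : Path (F A) a₁} {p₂ : Path (F A) a₂}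
    {q₁ : Path b₁ C} {q₂ : Path b₂ C} (heq : p₁.comp (l₁.comp q₁) = p₂.comp (l₂.comp q₂)) :
    ResolvesUpToOverlap RT RP (of x (p₁.comp (r₁.comp q₁))) (of x (p₂.comp (r₂.comp q₂))) := by
  rw [← Path.comp_assoc, ← Path.comp_assoc] at heq
  rcases Path.eq_comp_or_eq_comp_of_comp_eq_comp heq with ⟨m, hp, rfl⟩ | ⟨m, hp, rfl⟩
  · exact path_path_of_prefix h₁ h₂ m q₂ (by rw [hp, Path.comp_assoc])
  · exact (path_path_of_prefix h₂ h₁ m q₁ (by rw [hp, Path.comp_assoc])).symm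

end CriticalPairs

theorem stmt5_general (RT : Set (Tagged X F × Tagged X F)) (RP : Set (PathPair Δ))
    (t₁ t₂ : Tagged X F) (hcrit : ∃ t, Red RT RP t t₁ ∧ Red RT RP t t₂) :
    ResolvesT RT RP t₁ t₂ ∨
    (∃ c₁ c₂ : Tagged X F, OverlapPairT RT RP c₁ c₂ ∧
        (ResolvesT RT RP c₁ c₂ → ResolvesT RT RP t₁ t₂)) ∨
    (∃ (a b : Δ) (c₁ c₂ : Quiver.Path a b), OverlapPairP RP c₁ c₂ ∧
        (ResolvesP RP c₁ c₂ → ResolvesT RT RP t₁ t₂)) := by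
  obtain ⟨t, h₁, h₂⟩ := hcrit
  obtain ⟨A, x, C, w, rfl, hx₁⟩ := h₁.exists_isReductOf
  obtain ⟨A', x', C', w', ht, hx₂⟩ := h₂.exists_isReductOf
  cases ht
  change ResolvesUpToOverlap RT RP t₁ t₂
  rcases hx₁ with ⟨_, p₁, q₁, _, y₁, v₁, hm₁, rfl, rfl⟩ | ⟨_, _, l₁, r₁, p₁, q₁, hm₁, rfl, rfl⟩ <;>
    rcases hx₂ with ⟨_, p₂, q₂, _, y₂, v₂, hm₂, heq, rfl⟩ | ⟨_, _, l₂, r₂, p₂, q₂, hm₂, heq, rfl⟩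
  · exact .tag_tag hm₁ hm₂ heq
  · exact .tag_path hm₁ hm₂ heq
  · exact (ResolvesUpToOverlap.tag_path hm₂ hm₁ heq.symm).symm
  · exact .path_path hm₁ hm₂ heq

/-- If `(t₁,t₂)` is a critical pair of `→_R`, then either it resolves, or there is an
overlap between two rules of `R` (of one of the five types) whose resulting critical
pair `(c₁,c₂)` is such that if `(c₁,c₂)` resolves then `(t₁,t₂)` resolves. -/
theorem stmt5 (RT : Set (Tagged X F × Tagged X F)) (RP : Set (PathPair Δ))
    (hRT : ∀ p ∈ RT, Tagged.tau p.1 = Tagged.tau p.2)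
    (t₁ t₂ : Tagged X F) (hcrit : ∃ t, Red RT RP t t₁ ∧ Red RT RP t t₂) :
    ResolvesT RT RP t₁ t₂ ∨
    (∃ c₁ c₂ : Tagged X F, OverlapPairT RT RP c₁ c₂ ∧
        (ResolvesT RT RP c₁ c₂ → ResolvesT RT RP t₁ t₂)) ∨
    (∃ (a b : Δ) (c₁ c₂ : Quiver.Path a b), OverlapPairP RP c₁ c₂ ∧
        (ResolvesP RP c₁ c₂ → ResolvesT RT RP t₁ t₂)) :=
  stmt5_general RT RP t₁ t₂ hcrit
end

section
/- C(R) is a group: the multiplication [a][b] := [ab] is well defined on Peiffer equivalence classes, the class of the empty Y-sequence is an identity, and every class is invertible; explicitly, the inverse of [y₁^{ε₁} ⋯ yₙ^{εₙ}] is [yₙ^{−εₙ} ⋯ y₁^{−ε₁}]. -/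
/-- A letter `(ρ, u)^ε` of a Y-sequence: an element of `Y = ℛ × F(X)` together with a
sign (`true` for `+`, `false` for `-`). -/
abbrev YLetter (X R : Type) : Type := (R × FreeGroup X) × Bool

/-- The action of `F(X)` on letters: `(ρ, u)^ε · x := (ρ, u x)^ε`. -/
def actLetter {X R : Type} (x : FreeGroup X) (y : YLetter X R) : YLetter X R :=
  ((y.1.1, y.1.2 * x), y.2)

/-- The letterwise action of `F(X)` on Y-sequences. -/
def actSeq {X R : Type} (x : FreeGroup X) (a : List (YLetter X R)) : List (YLetter X R) :=
  a.map (actLetter x)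

/-- `δ((ρ, u)^ε) := u⁻¹ (w ρ)^{ε} u`. -/
def deltaLetter {X R : Type} (w : R → FreeGroup X) (y : YLetter X R) : FreeGroup X :=
  y.1.2⁻¹ * (if y.2 then w y.1.1 else (w y.1.1)⁻¹) * y.1.2

/-- The monoid homomorphism `δ` on Y-sequences. -/
def deltaSeq {X R : Type} (w : R → FreeGroup X) (a : List (YLetter X R)) : FreeGroup X :=
  (a.map (deltaLetter w)).prod

/-- The Peiffer rules `R_P`:
`y⁻z⁺y⁺ → z⁺^{δ y⁺}`, `y⁺z⁻y⁻ → z⁻^{δ y⁻}`, `y⁻y⁺ → λ` and `y⁺y⁻ → λ`. -/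
inductive PeifferRule {X R : Type} (w : R → FreeGroup X) :
    List (YLetter X R) → List (YLetter X R) → Prop
  | r1 (y z : R × FreeGroup X) :
      PeifferRule w [(y, false), (z, true), (y, true)]
        [actLetter (deltaLetter w (y, true)) (z, true)]
  | r2 (y z : R × FreeGroup X) :
      PeifferRule w [(y, true), (z, false), (y, false)]
        [actLetter (deltaLetter w (y, false)) (z, false)]
  | r3 (y : R × FreeGroup X) : PeifferRule w [(y, false), (y, true)] []
  | r4 (y : R × FreeGroup X) : PeifferRule w [(y, true), (y, false)] []

/-- One-step rewriting with respect to the Peiffer rules. -/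
def PeifferStep {X R : Type} (w : R → FreeGroup X)
    (a b : List (YLetter X R)) : Prop :=
  ∃ u v lhs rhs, PeifferRule w lhs rhs ∧ a = u ++ lhs ++ v ∧ b = u ++ rhs ++ v

/-- Peiffer equivalence `↔*_{R_P}`: the reflexive–symmetric–transitive closure
of one-step Peiffer rewriting. -/
def PeifferEquiv {X R : Type} (w : R → FreeGroup X) :
    List (YLetter X R) → List (YLetter X R) → Prop :=
  Relation.EqvGen (PeifferStep w)

/-- The formal inverse `yₙ^{-εₙ} ⋯ y₁^{-ε₁}` of a Y-sequence `y₁^{ε₁} ⋯ yₙ^{εₙ}`. -/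
def invSeq {X R : Type} (a : List (YLetter X R)) : List (YLetter X R) :=
  a.reverse.map (fun y => (y.1, !y.2))


lemma peiffer_step_ctx {X R : Type} (w : R → FreeGroup X) (u v : List (YLetter X R))
    {a b : List (YLetter X R)} (h : PeifferStep w a b) :
    PeifferStep w (u ++ a ++ v) (u ++ b ++ v) := by
  obtain ⟨u', v', l, r, hr, ha, hb⟩ := h
  exact ⟨u ++ u', v' ++ v, l, r, hr, by simp [ha], by simp [hb]⟩

lemma peiffer_equiv_ctx {X R : Type} (w : R → FreeGroup X) (u v : List (YLetter X R))
    {a b : List (YLetter X R)} (h : PeifferEquiv w a b) :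
    PeifferEquiv w (u ++ a ++ v) (u ++ b ++ v) := by
  induction h with
  | rel x y h => exact Relation.EqvGen.rel _ _ (peiffer_step_ctx w u v h)
  | refl x => exact Relation.EqvGen.refl _
  | symm x y _ ih => exact Relation.EqvGen.symm _ _ ih
  | trans x y z _ _ ih1 ih2 => exact Relation.EqvGen.trans _ _ _ ih1 ih2

lemma peiffer_cancel {X R : Type} (w : R → FreeGroup X) (y : YLetter X R) :
    PeifferStep w [y, (y.1, !y.2)] [] := by
  obtain ⟨p, b⟩ := y
  cases b with
  | false => exact ⟨[], [], _, _, PeifferRule.r3 p, by simp, by simp⟩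
  | true => exact ⟨[], [], _, _, PeifferRule.r4 p, by simp, by simp⟩

lemma peiffer_cancel' {X R : Type} (w : R → FreeGroup X) (y : YLetter X R) :
    PeifferStep w [(y.1, !y.2), y] [] := by
  obtain ⟨p, b⟩ := y
  cases b with
  | false => exact ⟨[], [], _, _, PeifferRule.r4 p, by simp, by simp⟩
  | true => exact ⟨[], [], _, _, PeifferRule.r3 p, by simp, by simp⟩

/-- `C(R) = Y-sequences / Peiffer equivalence` is a group: concatenation descends to a
well-defined multiplication on Peiffer equivalence classes, the class of the empty
sequence is an identity, and the class of `yₙ^{-εₙ}⋯y₁^{-ε₁}` is inverse to the class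
of `y₁^{ε₁}⋯yₙ^{εₙ}`. -/
theorem stmt15 {X R : Type} (w : R → FreeGroup X) :
    (∀ a₁ a₂ b₁ b₂ : List (YLetter X R),
      PeifferEquiv w a₁ a₂ → PeifferEquiv w b₁ b₂ →
        PeifferEquiv w (a₁ ++ b₁) (a₂ ++ b₂)) ∧
    (∀ a : List (YLetter X R),
      a ++ ([] : List (YLetter X R)) = a ∧ ([] : List (YLetter X R)) ++ a = a) ∧
    (∀ a : List (YLetter X R),
      PeifferEquiv w (a ++ invSeq a) [] ∧ PeifferEquiv w (invSeq a ++ a) []) := by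
  have hctx := peiffer_equiv_ctx (X := X) (R := R) w
  refine ⟨?_, fun a => ⟨by simp, by simp⟩, ?_⟩
  · intro a₁ a₂ b₁ b₂ ha hb
    have h1 : PeifferEquiv w (a₁ ++ b₁) (a₂ ++ b₁) := by
      simpa using hctx [] b₁ ha
    have h2 : PeifferEquiv w (a₂ ++ b₁) (a₂ ++ b₂) := by
      simpa using hctx a₂ [] hb
    exact Relation.EqvGen.trans _ _ _ h1 h2
  · intro a
    induction a with
    | nil => exact ⟨Relation.EqvGen.refl _, Relation.EqvGen.refl _⟩
    | cons y t ih =>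
      obtain ⟨ih1, ih2⟩ := ih
      constructor
      · have h1 : PeifferEquiv w ((y :: t) ++ invSeq (y :: t))
            ([y] ++ [] ++ [(y.1, !y.2)]) := by
          have := hctx [y] [(y.1, !y.2)] ih1
          simpa [invSeq, List.append_assoc] using this
        refine Relation.EqvGen.trans _ _ _ h1 ?_
        exact Relation.EqvGen.rel _ _ (by simpa using peiffer_cancel w y)
      · have h0 : PeifferEquiv w (invSeq (y :: t) ++ (y :: t))
            (invSeq t ++ [] ++ t) := by
          have hstep : PeifferEquiv w (invSeq t ++ [(y.1, !y.2), y] ++ t)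
              (invSeq t ++ [] ++ t) :=
            Relation.EqvGen.rel _ _
              (peiffer_step_ctx w (invSeq t) t
                (peiffer_cancel' w y))
          simpa [invSeq, List.append_assoc] using hstep
        refine Relation.EqvGen.trans _ _ _ h0 ?_
        simpa [PeifferEquiv] using ih2
end

section
/- The group C(R), together with the homomorphism δ₂ and the action of F(X), satisfies the crossed module axioms: (CM1) δ₂([a]^x) = x⁻¹ · δ₂[a] · x for every Y-sequence a and every x ∈ F(X); and (CM2, the Peiffer relation) [a]⁻¹ [b] [a] = [b^{δ(a)}] for all Y-sequences a and b, where b^{δ(a)} denotes the action of δ(a) ∈ F(X) on b. -/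
section Aux
variable {X R : Type} (w : R → FreeGroup X)

lemma actSeq_actSeq (x x' : FreeGroup X) (b : List (YLetter X R)) :
    actSeq x (actSeq x' b) = actSeq (x' * x) b := by
  simp [actSeq, actLetter, List.map_map, Function.comp, mul_assoc]

lemma actSeq_one (b : List (YLetter X R)) : actSeq 1 b = b := by
  have : actLetter (1 : FreeGroup X) = (id : YLetter X R → YLetter X R) := by
    funext y; simp [actLetter]
  simp [actSeq, this]

lemma deltaLetter_act (x : FreeGroup X) (y : YLetter X R) :
    deltaLetter w (actLetter x y) = x⁻¹ * deltaLetter w y * x := by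
  simp [deltaLetter, actLetter, mul_assoc]
  split_ifs with h <;> simp [h]

lemma deltaLetter_mul_inv (p : R × FreeGroup X) :
    deltaLetter w (p, true) * deltaLetter w (p, false) = 1 := by
  simp [deltaLetter]; group

lemma deltaLetter_inv_mul (p : R × FreeGroup X) :
    deltaLetter w (p, false) * deltaLetter w (p, true) = 1 := by
  simp [deltaLetter]; group

lemma peif_ctx {a b : List (YLetter X R)} (u v : List (YLetter X R))
    (h : PeifferEquiv w a b) : PeifferEquiv w (u ++ a ++ v) (u ++ b ++ v) := by
  induction h with
  | rel a b h =>
      obtain ⟨s, t, lhs, rhs, hr, ha, hb⟩ := h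
      exact Relation.EqvGen.rel _ _ ⟨u ++ s, t ++ v, lhs, rhs, hr,
        by simp [ha, List.append_assoc], by simp [hb, List.append_assoc]⟩
  | refl a => exact Relation.EqvGen.refl _
  | symm a b _ ih => exact Relation.EqvGen.symm _ _ ih
  | trans a b c _ _ ih1 ih2 => exact Relation.EqvGen.trans _ _ _ ih1 ih2

lemma peif_rule {lhs rhs : List (YLetter X R)} (h : PeifferRule w lhs rhs)
    (u v : List (YLetter X R)) :
    PeifferEquiv w (u ++ lhs ++ v) (u ++ rhs ++ v) :=
  Relation.EqvGen.rel _ _ ⟨u, v, lhs, rhs, h, rfl, rfl⟩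

lemma pair_cancel (p : R × FreeGroup X) (ε : Bool) :
    PeifferRule w [(p, ε), (p, !ε)] [] := by
  cases ε
  · exact PeifferRule.r3 p
  · exact PeifferRule.r4 p

lemma peif_letter (p : R × FreeGroup X) (ε : Bool) (z : YLetter X R) :
    PeifferEquiv w [(p, !ε), z, (p, ε)] [actLetter (deltaLetter w (p, ε)) z] := by
  obtain ⟨q, σ⟩ := z
  cases ε <;> cases σ
  · -- ε = false, σ = false : direct r2
    simpa using peif_rule w (PeifferRule.r2 p q) [] []
  · -- ε = false, σ = true : mixed, via r1
    set q' : YLetter X R := actLetter (deltaLetter w (p, false)) (q, true) with hq'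
    have key : actLetter (deltaLetter w (p, true)) (q'.1, true) = (q, true) := by
      simp [hq', actLetter, mul_assoc, deltaLetter_inv_mul w p]
    have h1 : PeifferEquiv w
        ([(p, true)] ++ [(p, false), (q'.1, true), (p, true)] ++ [(p, false)])
        ([(p, true)] ++ [actLetter (deltaLetter w (p, true)) (q'.1, true)] ++ [(p, false)]) :=
      peif_rule w (PeifferRule.r1 p q'.1) _ _
    rw [key] at h1
    have h2 : PeifferEquiv w
        ([] ++ [(p, true), (p, false)] ++ [(q'.1, true), (p, true), (p, false)])
        ([] ++ [] ++ [(q'.1, true), (p, true), (p, false)]) :=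
      peif_rule w (PeifferRule.r4 p) _ _
    have h3 : PeifferEquiv w
        ([(q'.1, true)] ++ [(p, true), (p, false)] ++ [])
        ([(q'.1, true)] ++ [] ++ []) :=
      peif_rule w (PeifferRule.r4 p) _ _
    simp only [List.append_assoc, List.cons_append, List.nil_append, List.append_nil] at h1 h2 h3
    have hq1 : (q'.1, true) = q' := rfl
    refine Relation.EqvGen.trans _ _ _ (Relation.EqvGen.symm _ _ h1) ?_
    refine Relation.EqvGen.trans _ _ _ h2 ?_
    rw [hq1] at h3
    exact h3
  · -- ε = true, σ = false : mixed, via r2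
    set q' : YLetter X R := actLetter (deltaLetter w (p, true)) (q, false) with hq'
    have key : actLetter (deltaLetter w (p, false)) (q'.1, false) = (q, false) := by
      simp [hq', actLetter, mul_assoc, deltaLetter_mul_inv w p]
    have h1 : PeifferEquiv w
        ([(p, false)] ++ [(p, true), (q'.1, false), (p, false)] ++ [(p, true)])
        ([(p, false)] ++ [actLetter (deltaLetter w (p, false)) (q'.1, false)] ++ [(p, true)]) :=
      peif_rule w (PeifferRule.r2 p q'.1) _ _
    rw [key] at h1
    have h2 : PeifferEquiv w
        ([] ++ [(p, false), (p, true)] ++ [(q'.1, false), (p, false), (p, true)])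
        ([] ++ [] ++ [(q'.1, false), (p, false), (p, true)]) :=
      peif_rule w (PeifferRule.r3 p) _ _
    have h3 : PeifferEquiv w
        ([(q'.1, false)] ++ [(p, false), (p, true)] ++ [])
        ([(q'.1, false)] ++ [] ++ []) :=
      peif_rule w (PeifferRule.r3 p) _ _
    simp only [List.append_assoc, List.cons_append, List.nil_append, List.append_nil] at h1 h2 h3
    have hq1 : (q'.1, false) = q' := rfl
    refine Relation.EqvGen.trans _ _ _ (Relation.EqvGen.symm _ _ h1) ?_
    refine Relation.EqvGen.trans _ _ _ h2 ?_
    rw [hq1] at h3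
    exact h3
  · -- ε = true, σ = true : direct r1
    simpa using peif_rule w (PeifferRule.r1 p q) [] []

lemma peif_letter_seq (p : R × FreeGroup X) (ε : Bool) (b : List (YLetter X R)) :
    PeifferEquiv w ([(p, !ε)] ++ b ++ [(p, ε)])
      (actSeq (deltaLetter w (p, ε)) b) := by
  induction b with
  | nil =>
      have : PeifferEquiv w ([] ++ [(p, !ε), (p, ε)] ++ []) ([] ++ [] ++ []) := by
        cases ε
        · exact peif_rule w (PeifferRule.r4 p) [] []
        · exact peif_rule w (PeifferRule.r3 p) [] []
      simpa [actSeq] using this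
  | cons z b ih =>
      -- insert (p, ε)(p, !ε) after z
      have h1 : PeifferEquiv w
          ([(p, !ε), z] ++ [(p, ε), (p, !ε)] ++ (b ++ [(p, ε)]))
          ([(p, !ε), z] ++ [] ++ (b ++ [(p, ε)])) :=
        peif_rule w (pair_cancel w p ε) _ _
      have h2 : PeifferEquiv w
          ([] ++ [(p, !ε), z, (p, ε)] ++ ((p, !ε) :: b ++ [(p, ε)]))
          ([] ++ [actLetter (deltaLetter w (p, ε)) z] ++ ((p, !ε) :: b ++ [(p, ε)])) :=
        peif_ctx w _ _ (peif_letter w p ε z)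
      have h3 : PeifferEquiv w
          ([actLetter (deltaLetter w (p, ε)) z] ++ ([(p, !ε)] ++ b ++ [(p, ε)]) ++ [])
          ([actLetter (deltaLetter w (p, ε)) z] ++ actSeq (deltaLetter w (p, ε)) b ++ []) :=
        peif_ctx w _ _ ih
      simp only [List.append_assoc, List.cons_append, List.nil_append, List.append_nil] at h1 h2 h3
      refine Relation.EqvGen.trans _ _ _ (Relation.EqvGen.symm _ _ h1) ?_
      refine Relation.EqvGen.trans _ _ _ h2 ?_
      simpa [actSeq, PeifferEquiv] using h3

end Aux

/-- `C(R)`, with `δ₂` and the `F(X)`-action, satisfies the crossed module axioms: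
CM1: `δ₂([a]^x) = x⁻¹ δ₂[a] x`; CM2 (the Peiffer relation):
`[a]⁻¹[b][a] = [b^{δ(a)}]`, i.e. `a⁻¹ b a` is Peiffer equivalent to `b^{δ(a)}`. -/
theorem stmt18 {X R : Type} (w : R → FreeGroup X) :
    (∀ (a : List (YLetter X R)) (x : FreeGroup X),
      deltaSeq w (actSeq x a) = x⁻¹ * deltaSeq w a * x) ∧
    (∀ a b : List (YLetter X R),
      PeifferEquiv w (invSeq a ++ b ++ a) (actSeq (deltaSeq w a) b)) := by
  constructor
  · intro a x
    induction a with
    | nil => simp [actSeq, deltaSeq]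
    | cons y t ih =>
        simp only [actSeq, List.map_cons, deltaSeq, List.prod_cons] at *
        rw [ih, deltaLetter_act]
        group
  · intro a b
    induction a generalizing b with
    | nil =>
        have : invSeq ([] : List (YLetter X R)) ++ b ++ [] = actSeq (deltaSeq w []) b := by
          simp [invSeq, deltaSeq, actSeq_one]
        rw [this]
        exact Relation.EqvGen.refl _
    | cons y t ih =>
        obtain ⟨p, ε⟩ := y
        have heq : invSeq ((p, ε) :: t) ++ b ++ ((p, ε) :: t)
            = invSeq t ++ ([(p, !ε)] ++ b ++ [(p, ε)]) ++ t := by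
          simp [invSeq, List.append_assoc]
        rw [heq]
        have h1 : PeifferEquiv w
            (invSeq t ++ ([(p, !ε)] ++ b ++ [(p, ε)]) ++ t)
            (invSeq t ++ actSeq (deltaLetter w (p, ε)) b ++ t) :=
          peif_ctx w _ _ (peif_letter_seq w p ε b)
        refine Relation.EqvGen.trans _ _ _ h1 ?_
        have h2 := ih (actSeq (deltaLetter w (p, ε)) b)
        rw [actSeq_actSeq] at h2
        have : actSeq (deltaLetter w (p, ε) * deltaSeq w t) b
            = actSeq (deltaSeq w ((p, ε) :: t)) b := by
          simp [deltaSeq]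
        rw [this] at h2
        exact h2
end
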